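/- Let Q ⊆ (0, ∞) × ℝ be a measurable set, let Q̂ = { x ∈ ℝ³ : ( ‖(x₁, x₂)‖ , x₃ ) ∈ Q } be the corresponding solid of revolution, let u : ℝ² → ℝ be continuously differentiable, and let û(x₁,x₂,x₃) = u( ‖(x₁,x₂)‖ , x₃ ) be the rotational extension of u. Then ∫_{Q̂} ( û(x)² + ‖∇û(x)‖² ) dx = 2π · ∫_{Q} ( u(r, z)² + ‖∇u(r, z)‖² ) · r d(r, z), i.e. ‖û‖²_{H¹(Q̂)} = 2π · ‖u‖²_{H¹_r(Q)}, as an identity in [0, ∞]. -/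

import Mathlib

/-!
In cylindrical coordinates `x = (r cos θ, r sin θ, z)` Lebesgue measure on `ℝ³` is `r dr dθ dz`,
and the integrand does not depend on `θ`, so integrating `θ` out produces the factor `2π`.
Off the axis the chain rule gives `∂ᵢû = (xᵢ / r) ∂ᵣu` for `i = 0, 1` and `∂₂û = ∂_z u`, hence
`‖∇û(x)‖ = ‖∇u(r, z)‖`; the axis `r = 0` does not meet `Q̂`.
-/

open MeasureTheory

/-- The point `(a, b)` of the Euclidean plane. -/
noncomputable def mk2 (a b : ℝ) : EuclideanSpace ℝ (Fin 2) :=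
  (EuclideanSpace.equiv (Fin 2) ℝ).symm ![a, b]

open scoped ENNReal

theorem OrthonormalBasis.sum_sq_apply_eq_norm_sq {ι E : Type*} [Fintype ι]
    [NormedAddCommGroup E] [InnerProductSpace ℝ E] [CompleteSpace E]
    (b : OrthonormalBasis ι ℝ E) (M : StrongDual ℝ E) :
    ∑ i, M (b i) ^ 2 = ‖M‖ ^ 2 := by
  simp_rw [← InnerProductSpace.toDual_symm_apply (x := b _), b.sum_sq_inner_left,
    LinearIsometryEquiv.norm_map]

theorem mk2_eq_smul_add_smul (a b : ℝ) :
    mk2 a b = a • EuclideanSpace.single 0 1 + b • EuclideanSpace.single 1 1 := by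
  ext i
  fin_cases i <;> simp [mk2]

theorem HasFDerivAt.mk2 {E : Type*} [NormedAddCommGroup E] [NormedSpace ℝ E] {f g : E → ℝ}
    {f' g' : StrongDual ℝ E} {x : E} (hf : HasFDerivAt f f' x) (hg : HasFDerivAt g g' x) :
    HasFDerivAt (fun y => _root_.mk2 (f y) (g y))
      (f'.smulRight (EuclideanSpace.single 0 1) + g'.smulRight (EuclideanSpace.single 1 1)) x := by
  simp_rw [mk2_eq_smul_add_smul (f _)]
  exact (hf.smul_const _).add (hg.smul_const _)

theorem measurePreserving_mk2 : MeasurePreserving (fun q : ℝ × ℝ => mk2 q.1 q.2) :=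
  (PiLp.volume_preserving_toLp (Fin 2)).comp (volume_preserving_finTwoArrow ℝ).symm

@[fun_prop]
theorem Measurable.mk2 {α : Type*} [MeasurableSpace α] {f g : α → ℝ} (hf : Measurable f)
    (hg : Measurable g) : Measurable fun a => _root_.mk2 (f a) (g a) :=
  measurePreserving_mk2.measurable.comp (hf.prodMk hg)

theorem EuclideanSpace.measurePreserving_fin_three :
    MeasurePreserving (fun x : EuclideanSpace ℝ (Fin 3) => (x 2, (x 0, x 1))) :=
  ((MeasurePreserving.id volume).prod (volume_preserving_finTwoArrow ℝ)).comp
    ((volume_preserving_piFinSuccAbove (fun _ : Fin 3 => ℝ) 2).comp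
      (PiLp.volume_preserving_ofLp (Fin 3)))

theorem lintegral_comp_sqrt_sq_add_sq (g : ℝ → ℝ≥0∞) (hg : Measurable g) :
    ∫⁻ y : ℝ × ℝ, g √(y.1 ^ 2 + y.2 ^ 2) =
      ENNReal.ofReal (2 * Real.pi) * ∫⁻ r, g r * ENNReal.ofReal r := by
  have hpolar (p : ℝ × ℝ) :
      √((polarCoord.symm p).1 ^ 2 + (polarCoord.symm p).2 ^ 2) = |p.1| := by
    rw [polarCoord_symm_apply, ← Real.sqrt_sq_eq_abs]
    congr 1
    linear_combination p.1 ^ 2 * Real.sin_sq_add_cos_sq p.2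
  have hsupp : Function.support (fun r => g r * ENNReal.ofReal r) ⊆ Set.Ioi 0 :=
    Function.support_subset_iff'.mpr fun r hr => by
      rw [ENNReal.ofReal_of_nonpos (not_lt.mp hr), mul_zero]
  rw [← lintegral_comp_polarCoord_symm, polarCoord_target, Measure.volume_eq_prod,
    setLIntegral_prod _ (by fun_prop)]
  simp only [hpolar, lintegral_const, Measure.restrict_apply MeasurableSet.univ, Set.univ_inter,
    Real.volume_Ioo, sub_neg_eq_add, ← two_mul]
  rw [lintegral_mul_const' _ _ ENNReal.ofReal_ne_top, mul_comm,
    ← setLIntegral_eq_of_support_subset hsupp]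
  refine congrArg _ (setLIntegral_congr_fun measurableSet_Ioi fun r hr => ?_)
  rw [abs_of_pos hr, smul_eq_mul, mul_comm]

noncomputable def cylindricalRZ (x : EuclideanSpace ℝ (Fin 3)) : EuclideanSpace ℝ (Fin 2) :=
  mk2 √(x 0 ^ 2 + x 1 ^ 2) (x 2)

@[fun_prop]
theorem measurable_cylindricalRZ : Measurable cylindricalRZ := by
  unfold cylindricalRZ
  fun_prop

theorem lintegral_comp_cylindricalRZ (h : EuclideanSpace ℝ (Fin 2) → ℝ≥0∞) (hh : Measurable h) :
    ∫⁻ x, h (cylindricalRZ x) =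
      ENNReal.ofReal (2 * Real.pi) * ∫⁻ p, h p * ENNReal.ofReal (p 0) :=
  calc ∫⁻ x, h (cylindricalRZ x)
      = ∫⁻ t : ℝ × (ℝ × ℝ), h (mk2 √(t.2.1 ^ 2 + t.2.2 ^ 2) t.1) :=
        EuclideanSpace.measurePreserving_fin_three.lintegral_comp
          (f := fun t => h (mk2 √(t.2.1 ^ 2 + t.2.2 ^ 2) t.1)) (by fun_prop)
    _ = ∫⁻ z, ∫⁻ y : ℝ × ℝ, h (mk2 √(y.1 ^ 2 + y.2 ^ 2) z) :=
        lintegral_prod _ (by fun_prop)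
    _ = ∫⁻ z, ENNReal.ofReal (2 * Real.pi) * ∫⁻ r, h (mk2 r z) * ENNReal.ofReal r :=
        lintegral_congr fun z => lintegral_comp_sqrt_sq_add_sq (h <| mk2 · z) (by fun_prop)
    _ = ENNReal.ofReal (2 * Real.pi) * ∫⁻ q : ℝ × ℝ, h (mk2 q.1 q.2) * ENNReal.ofReal q.1 := by
        rw [lintegral_const_mul' _ _ ENNReal.ofReal_ne_top, Measure.volume_eq_prod,
          lintegral_prod_symm _ (by fun_prop)]
    _ = ENNReal.ofReal (2 * Real.pi) * ∫⁻ p, h p * ENNReal.ofReal (p 0) :=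
        congrArg _ (measurePreserving_mk2.lintegral_comp
          (f := fun p => h p * ENNReal.ofReal (p 0)) (by fun_prop))

theorem setLIntegral_comp_cylindricalRZ (h : EuclideanSpace ℝ (Fin 2) → ℝ≥0∞)
    (hh : Measurable h) {s : Set (EuclideanSpace ℝ (Fin 2))} (hs : MeasurableSet s) :
    ∫⁻ x in cylindricalRZ ⁻¹' s, h (cylindricalRZ x) =
      ENNReal.ofReal (2 * Real.pi) * ∫⁻ p in s, h p * ENNReal.ofReal (p 0) := by
  rw [← lintegral_indicator (measurable_cylindricalRZ hs), ← lintegral_indicator hs]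
  simp_rw [Set.indicator_mul_left]
  exact lintegral_comp_cylindricalRZ (s.indicator h) (hh.indicator hs)

theorem norm_fderiv_comp_cylindricalRZ {u : EuclideanSpace ℝ (Fin 2) → ℝ}
    {x : EuclideanSpace ℝ (Fin 3)} (hu : DifferentiableAt ℝ u (cylindricalRZ x))
    (hx : 0 < x 0 ^ 2 + x 1 ^ 2) :
    ‖fderiv ℝ (u ∘ cylindricalRZ) x‖ = ‖fderiv ℝ u (cylindricalRZ x)‖ := by
  let proj (i : Fin 3) : StrongDual ℝ (EuclideanSpace ℝ (Fin 3)) := EuclideanSpace.proj i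
  have hρ := (((proj 0).hasFDerivAt.pow 2).add ((proj 1).hasFDerivAt.pow 2)).sqrt hx.ne'
  have hF : HasFDerivAt cylindricalRZ _ x := hρ.mk2 (proj 2).hasFDerivAt
  have hρ_sq : √(x 0 ^ 2 + x 1 ^ 2) ^ 2 = x 0 ^ 2 + x 1 ^ 2 := Real.sq_sqrt hx.le
  rw [(hu.hasFDerivAt.comp x hF).fderiv, ← sq_eq_sq₀ (norm_nonneg _) (norm_nonneg _),
    ← (EuclideanSpace.basisFun _ ℝ).sum_sq_apply_eq_norm_sq,
    ← (EuclideanSpace.basisFun _ ℝ).sum_sq_apply_eq_norm_sq]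
  simp only [Fin.isValue, PiLp.proj_apply, Pi.add_apply, one_div, mul_inv_rev,
    Nat.add_one_sub_one, pow_one, nsmul_eq_mul, Nat.cast_ofNat, smul_add,
    ContinuousLinearMap.comp_add, EuclideanSpace.basisFun_apply, add_apply,
    ContinuousLinearMap.comp_apply, ContinuousLinearMap.smulRight_apply,
    smul_apply, PiLp.single_apply, smul_eq_mul, mul_ite, mul_one, mul_zero,
    map_smul, ite_smul, one_smul, zero_smul, Fin.sum_univ_three, Fin.sum_univ_two, ↓reduceIte,
    one_ne_zero, zero_ne_one, Fin.reduceEq, add_zero, zero_add, zero_mul, map_zero, add_left_inj,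
    proj]
  field_simp
  linear_combination -(fderiv ℝ u (cylindricalRZ x) (EuclideanSpace.single 0 1)) ^ 2 * hρ_sq

/-- For a `C¹` function `u` on the half-plane and its rotational extension
`uhat` about the `x₃`-axis, the `H¹`-norm of `uhat` on the solid of revolution
`Q̂` equals `2π` times the weighted `H¹_r`-norm of `u` on the cross section `Q`. -/
theorem rotational_H1_norm_identity
    (Q : Set (EuclideanSpace ℝ (Fin 2))) (hQmeas : MeasurableSet Q)
    (hQ : ∀ p ∈ Q, 0 < p 0)
    (u : EuclideanSpace ℝ (Fin 2) → ℝ) (hu : ContDiff ℝ 1 u)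
    (uhat : EuclideanSpace ℝ (Fin 3) → ℝ)
    (huhat : ∀ x : EuclideanSpace ℝ (Fin 3),
      uhat x = u (mk2 (Real.sqrt ((x 0) ^ 2 + (x 1) ^ 2)) (x 2))) :
    (∫⁻ x in {x : EuclideanSpace ℝ (Fin 3) |
        mk2 (Real.sqrt ((x 0) ^ 2 + (x 1) ^ 2)) (x 2) ∈ Q},
        ENNReal.ofReal ((uhat x) ^ 2 + ‖fderiv ℝ uhat x‖ ^ 2)) =
      ENNReal.ofReal (2 * Real.pi) *
        ∫⁻ p in Q,
          ENNReal.ofReal ((u p) ^ 2 + ‖fderiv ℝ u p‖ ^ 2) *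
            ENNReal.ofReal (p 0) := by
  have huhat' : uhat = u ∘ cylindricalRZ := funext huhat
  have hu_cont := hu.continuous
  have hDu_cont := hu.continuous_fderiv one_ne_zero
  show ∫⁻ x in cylindricalRZ ⁻¹' Q, _ = _
  calc _ = ∫⁻ x in cylindricalRZ ⁻¹' Q,
        ENNReal.ofReal (u (cylindricalRZ x) ^ 2 + ‖fderiv ℝ u (cylindricalRZ x)‖ ^ 2) :=
        setLIntegral_congr_fun (measurable_cylindricalRZ hQmeas) fun x hx => by
          rw [huhat', Function.comp_apply, norm_fderiv_comp_cylindricalRZ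
            (hu.differentiable one_ne_zero _) (Real.sqrt_pos.mp (hQ _ hx))]
    _ = _ := setLIntegral_comp_cylindricalRZ
        (fun p => ENNReal.ofReal (u p ^ 2 + ‖fderiv ℝ u p‖ ^ 2)) (by fun_prop) hQmeas
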